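/- For all integers 1 ≤ k ≤ n, the function B ↦ cot(𝒬_k(B)) is concave on Γ_I: for all Hermitian B, B' ∈ Γ_I and s ∈ [0,1], cot(𝒬_k(s B + (1−s) B')) ≥ s · cot(𝒬_k(B)) + (1−s) · cot(𝒬_k(B')). (For B ∈ Γ_I one has 𝒬_k(B) ∈ (0, π), so the cotangent is defined.) -/

import Mathlib

open Real

/-- `arccot x = π/2 - arctan x`, a strictly decreasing bijection from `ℝ` onto `(0, π)`. -/
noncomputable def arccot (x : ℝ) : ℝ := π / 2 - Real.arctan x

/-- `𝒬_{k,n}(λ)`: the maximum over subsets `J ⊆ {1,…,n}` with `|J| = k` of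
`∑_{j ∈ J} arccot (λ j)`. -/
noncomputable def Qfun (n k : ℕ) (lam : Fin n → ℝ) : ℝ :=
  sSup {x : ℝ | ∃ s : Finset (Fin n), s.card = k ∧ x = ∑ i ∈ s, arccot (lam i)}

/-!
Let `C = s • B + (1 - s) • B'`, diagonalised by a unitary `U`, and `θᵢ = arccot λᵢ(C)`. If
`W` diagonalises `B` and `V = U⋆ W`, the diagonal of `U⋆ B U` is the image of the eigenvalues
of `B` under the doubly stochastic matrix `(|Vᵢⱼ|²)`, so by Birkhoff's theorem any weighted sum
of its entries dominates the same weighted sum of some permutation of the eigenvalues. With the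
weights `sin² θᵢ` this meets `cotGap t u = sin² t (cot u - cot t)`, which is subadditive in the
pair `(t, u)`. Summing over a maximising `k`-set `J` of `C`, with `Q = 𝒬_k(C) = ∑_J θᵢ`,
gives `s cotGap Q 𝒬_k(B) + (1 - s) cotGap Q 𝒬_k(B') ≤ ∑_J sin² θᵢ (λᵢ(C) - cot θᵢ) = 0`,
which is the claim after dividing by `sin² Q`. The same estimate for the angles of `C` scaled down to a
total below `π` shows first that `C ∈ Γ_I`, so that `Q < π`.
-/

open Matrix Finset

lemma cot_eq_tan_pi_div_two_sub (x : ℝ) : cot x = tan (π / 2 - x) := by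
  rw [tan_pi_div_two_sub, tan_inv_eq_cot]

lemma strictAntiOn_cot : StrictAntiOn cot (Set.Ioo 0 π) := by
  intro x hx y hy hxy
  rw [cot_eq_tan_pi_div_two_sub, cot_eq_tan_pi_div_two_sub]
  exact strictMonoOn_tan ⟨by linarith [hy.2], by linarith [hy.1]⟩
    ⟨by linarith [hx.2], by linarith [hx.1]⟩ (by linarith)

lemma arccot_pos (x : ℝ) : 0 < arccot x := by
  rw [arccot]; linarith [arctan_lt_pi_div_two x]

lemma arccot_lt_pi (x : ℝ) : arccot x < π := by
  rw [arccot]; linarith [neg_pi_div_two_lt_arctan x]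

lemma cot_arccot (x : ℝ) : cot (arccot x) = x := by
  rw [cot_eq_tan_pi_div_two_sub, arccot, sub_sub_cancel, tan_arctan]

/-- For `t = arccot λ` and `u = arccot μ` this is `(μ - λ) / (1 + λ ^ 2)`, the first-order
approximation of `t - u`. -/
noncomputable def cotGap (t u : ℝ) : ℝ := sin t ^ 2 * (cot u - cot t)

lemma cotGap_eq (t u : ℝ) : cotGap t u = sin t ^ 2 * cot u - sin t * cos t := by
  rw [cotGap, cot_eq_cos_div_sin t, mul_sub]
  rcases eq_or_ne (sin t) 0 with h | h
  · simp [h]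
  · field_simp

lemma cotGap_arccot (t x : ℝ) : cotGap t (arccot x) = sin t ^ 2 * (x - cot t) := by
  rw [cotGap, cot_arccot]

lemma antitoneOn_cotGap (t : ℝ) : AntitoneOn (cotGap t) (Set.Ioo 0 π) := fun _ hu _ hv huv =>
  mul_le_mul_of_nonneg_left (sub_le_sub_right (strictAntiOn_cot.antitoneOn hu hv huv) _)
    (sq_nonneg _)

lemma cotGap_add_le {a b c d : ℝ} (hb : 0 < b) (hd : 0 < d) (hbd : b + d < π) :
    cotGap (a + c) (b + d) ≤ cotGap a b + cotGap c d := by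
  have sb : 0 < sin b := sin_pos_of_pos_of_lt_pi hb (by linarith)
  have sd : 0 < sin d := sin_pos_of_pos_of_lt_pi hd (by linarith)
  have sbd : 0 < sin (b + d) := sin_pos_of_pos_of_lt_pi (by linarith) hbd
  -- the numerator of the difference is `x ^ 2 + y ^ 2 - 2 cos (a + c) x y` with
  -- `x = sin (a - b) sin d`, `y = sin (c - d) sin b`, nonnegative as `|cos (a + c)| ≤ 1`
  have hquad : 0 ≤ sin (a - b) ^ 2 * sin d ^ 2 + sin (c - d) ^ 2 * sin b ^ 2
      - 2 * cos (a + c) * sin (a - b) * sin (c - d) * sin b * sin d := by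
    nlinarith [sq_nonneg (sin (a - b) * sin d - sin (c - d) * sin b),
      sq_nonneg (sin (a - b) * sin d + sin (c - d) * sin b), cos_le_one (a + c),
      neg_one_le_cos (a + c)]
  have hdiff : cotGap a b + cotGap c d - cotGap (a + c) (b + d) =
      (sin (a - b) ^ 2 * sin d ^ 2 + sin (c - d) ^ 2 * sin b ^ 2
        - 2 * cos (a + c) * sin (a - b) * sin (c - d) * sin b * sin d)
        / (sin b * sin d * sin (b + d)) := by
    rw [eq_div_iff (by positivity)]
    simp only [cotGap_eq, cot_eq_cos_div_sin]
    field_simp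
    rw [sin_sub a b, sin_sub c d, sin_add a c, cos_add a c, sin_add b d, cos_add b d]
    linear_combination (-(sin b^2*sin d^2) + 2*cos c^2*sin b^2*sin d^2
        + sin c*cos c*sin b*cos b*sin d^2 - sin c*cos c*sin b^2*sin d*cos d
        - sin c^2*sin b*cos b*sin d*cos d + sin c^2*sin b^2*sin d^2) * (sin_sq_add_cos_sq a)
      + (sin b^2*sin d^2 - sin a*cos a*sin b*cos b*sin d^2 + sin a*cos a*sin b^2*sin d*cos d
        - sin a^2*sin b*cos b*sin d*cos d - sin a^2*sin b^2*sin d^2) * (sin_sq_add_cos_sq c)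
  have := div_nonneg hquad (by positivity : 0 ≤ sin b * sin d * sin (b + d))
  linarith

lemma cotGap_sum_le {ι : Type*} (t : Finset ι) (θ φ : ι → ℝ) (hφ : ∀ i ∈ t, 0 < φ i)
    (hφt : ∑ i ∈ t, φ i < π) :
    cotGap (∑ i ∈ t, θ i) (∑ i ∈ t, φ i) ≤ ∑ i ∈ t, cotGap (θ i) (φ i) := by
  induction t using Finset.cons_induction with
  | empty => simp [cotGap]
  | cons a u ha ih =>
    rw [sum_cons] at hφt
    simp only [sum_cons]
    have hφa := hφ a (mem_cons_self a u)
    have hφu : ∀ i ∈ u, 0 < φ i := fun i hi => hφ i (mem_cons_of_mem hi)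
    rcases u.eq_empty_or_nonempty with rfl | hu
    · simp
    · calc _ ≤ cotGap (θ a) (φ a) + cotGap (∑ i ∈ u, θ i) (∑ i ∈ u, φ i) :=
            cotGap_add_le hφa (sum_pos hφu hu) hφt
        _ ≤ _ := add_le_add_right (ih hφu (by linarith [sum_pos hφu hu])) _

section Qfun

variable {n k : ℕ} (lam : Fin n → ℝ)

lemma finite_setOf_sum_arccot :
    {x : ℝ | ∃ s : Finset (Fin n), s.card = k ∧ x = ∑ i ∈ s, arccot (lam i)}.Finite :=
  (Set.finite_range fun s : Finset (Fin n) => ∑ i ∈ s, arccot (lam i)).subset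
    (by rintro x ⟨s, -, rfl⟩; exact ⟨s, rfl⟩)

lemma sum_arccot_le_Qfun {J : Finset (Fin n)} (hJ : J.card = k) :
    ∑ i ∈ J, arccot (lam i) ≤ Qfun n k lam :=
  le_csSup (finite_setOf_sum_arccot lam).bddAbove ⟨J, hJ, rfl⟩

lemma exists_card_eq_Qfun_eq_sum (hkn : k ≤ n) :
    ∃ J : Finset (Fin n), J.card = k ∧ Qfun n k lam = ∑ i ∈ J, arccot (lam i) := by
  obtain ⟨J, -, hJ⟩ := exists_subset_card_eq (s := (univ : Finset (Fin n)))
    (by simpa using hkn)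
  refine Set.Nonempty.csSup_mem ?_ (finite_setOf_sum_arccot lam)
  exact ⟨_, J, hJ, rfl⟩

lemma Qfun_lt_pi (hkn : k ≤ n) (hΓ : ∑ i, arccot (lam i) < π) : Qfun n k lam < π := by
  obtain ⟨J, -, hJ⟩ := exists_card_eq_Qfun_eq_sum lam hkn
  rw [hJ]
  exact (sum_le_sum_of_subset_of_nonneg (subset_univ _) fun i _ _ => (arccot_pos _).le).trans_lt
    hΓ

end Qfun

section Schur

variable {ι 𝕜 : Type*} [Fintype ι] [DecidableEq ι] [RCLike 𝕜]

lemma exists_perm_dotProduct_le_of_mem_doublyStochastic {P : Matrix ι ι ℝ}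
    (hP : P ∈ doublyStochastic ℝ ι) (c x : ι → ℝ) :
    ∃ σ : Equiv.Perm ι, c ⬝ᵥ (x ∘ σ) ≤ c ⬝ᵥ (P *ᵥ x) := by
  let f : Matrix ι ι ℝ →ₗ[ℝ] ℝ :=
    { toFun := fun M => c ⬝ᵥ (M *ᵥ x)
      map_add' := fun M N => by simp [add_mulVec, dotProduct_add]
      map_smul' := fun r M => by simp [smul_mulVec, dotProduct_smul] }
  rw [← SetLike.mem_coe, doublyStochastic_eq_convexHull_permMatrix] at hP
  obtain ⟨_, ⟨σ, rfl⟩, hσ⟩ :=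
    (f.concaveOn convex_univ).exists_le_of_mem_convexHull (Set.subset_univ _) hP
  exact ⟨σ, by simpa [f, permMatrix_mulVec] using hσ⟩

lemma norm_sq_entries_mem_doublyStochastic {V : Matrix ι ι 𝕜} (hV : V ∈ unitaryGroup ι 𝕜) :
    Matrix.of (fun i j => ‖V i j‖ ^ 2) ∈ doublyStochastic ℝ ι := by
  rw [mem_doublyStochastic_iff_sum]
  refine ⟨fun i j => sq_nonneg _, fun i => ?_, fun j => ?_⟩
  · have h := congr_fun₂ (mem_unitaryGroup_iff.mp hV) i i
    simp only [mul_apply, star_apply, RCLike.star_def, RCLike.mul_conj, one_apply_eq] at h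
    exact_mod_cast h
  · have h := congr_fun₂ (mem_unitaryGroup_iff'.mp hV) j j
    simp only [mul_apply, star_apply, RCLike.star_def, RCLike.conj_mul, one_apply_eq] at h
    exact_mod_cast h

lemma re_mul_diagonal_mul_star_apply_self (V : Matrix ι ι 𝕜) (d : ι → ℝ) (i : ι) :
    RCLike.re ((V * diagonal (RCLike.ofReal ∘ d) * star V : Matrix ι ι 𝕜) i i) =
      (Matrix.of (fun i j => ‖V i j‖ ^ 2) *ᵥ d) i := by
  rw [mul_apply, map_sum]
  refine sum_congr rfl fun j _ => ?_
  rw [mul_diagonal, star_apply, RCLike.star_def, Function.comp_apply, mul_right_comm,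
    RCLike.mul_conj, ← RCLike.ofReal_pow, ← RCLike.ofReal_mul, RCLike.ofReal_re]
  simp only [of_apply]

lemma exists_perm_dotProduct_eigenvalues_le {A : Matrix ι ι 𝕜} (hA : A.IsHermitian)
    {U : Matrix ι ι 𝕜} (hU : U ∈ unitaryGroup ι 𝕜) (c : ι → ℝ) :
    ∃ σ : Equiv.Perm ι,
      c ⬝ᵥ (hA.eigenvalues ∘ σ) ≤ c ⬝ᵥ fun i => RCLike.re ((star U * A * U) i i) := by
  set V := star U * (hA.eigenvectorUnitary : Matrix ι ι 𝕜)
  have hV : V ∈ unitaryGroup ι 𝕜 := mul_mem (Unitary.star_mem hU) hA.eigenvectorUnitary.2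
  have hconj : star U * A * U = V * diagonal (RCLike.ofReal ∘ hA.eigenvalues) * star V := by
    conv_lhs => rw [hA.spectral_theorem]
    simp only [Unitary.conjStarAlgAut_apply, V, star_mul, star_star, Matrix.mul_assoc]
  obtain ⟨σ, hσ⟩ := exists_perm_dotProduct_le_of_mem_doublyStochastic
    (norm_sq_entries_mem_doublyStochastic hV) c hA.eigenvalues
  refine ⟨σ, hσ.trans_eq ?_⟩
  simp only [hconj, re_mul_diagonal_mul_star_apply_self]

end Schur

section Concavity

variable {n : ℕ}

lemma cotGap_Qfun_le {B : Matrix (Fin n) (Fin n) ℂ} (hB : B.IsHermitian)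
    (hΓB : ∑ i, arccot (hB.eigenvalues i) < π) {U : Matrix (Fin n) (Fin n) ℂ}
    (hU : U ∈ unitaryGroup (Fin n) ℂ) {J : Finset (Fin n)} (hJ : J.Nonempty) (θ : Fin n → ℝ) :
    cotGap (∑ i ∈ J, θ i) (Qfun n J.card hB.eigenvalues) ≤
      ∑ i ∈ J, sin (θ i) ^ 2 * (((star U * B * U) i i).re - cot (θ i)) := by
  obtain ⟨σ, hσ⟩ := exists_perm_dotProduct_eigenvalues_le hB hU
    (fun i => if i ∈ J then sin (θ i) ^ 2 else 0)
  simp only [dotProduct, ite_mul, zero_mul, sum_ite_mem, univ_inter, Function.comp_apply,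
    RCLike.re_to_complex] at hσ
  set P := ∑ i ∈ J, arccot (hB.eigenvalues (σ i))
  have hP : P ≤ Qfun n J.card hB.eigenvalues := by
    simpa [P, sum_map] using sum_arccot_le_Qfun hB.eigenvalues (card_map (s := J) σ.toEmbedding)
  have hQ : Qfun n J.card hB.eigenvalues < π :=
    Qfun_lt_pi _ ((card_le_univ J).trans_eq (Fintype.card_fin n)) hΓB
  have hPπ : P < π := hP.trans_lt hQ
  have hP0 : 0 < P := sum_pos (fun i _ => arccot_pos _) hJ
  calc cotGap (∑ i ∈ J, θ i) (Qfun n J.card hB.eigenvalues)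
      ≤ cotGap (∑ i ∈ J, θ i) P := antitoneOn_cotGap _ ⟨hP0, hPπ⟩ ⟨hP0.trans_le hP, hQ⟩ hP
    _ ≤ ∑ i ∈ J, cotGap (θ i) (arccot (hB.eigenvalues (σ i))) :=
      cotGap_sum_le J θ _ (fun i _ => arccot_pos _) hPπ
    _ ≤ ∑ i ∈ J, sin (θ i) ^ 2 * (((star U * B * U) i i).re - cot (θ i)) := by
      simp only [cotGap_arccot, mul_sub, sum_sub_distrib]
      linarith

lemma convexComb_cot_Qfun_le_cot_sum {B B' : Matrix (Fin n) (Fin n) ℂ}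
    (hB : B.IsHermitian) (hB' : B'.IsHermitian)
    (hΓB : ∑ i, arccot (hB.eigenvalues i) < π) (hΓB' : ∑ i, arccot (hB'.eigenvalues i) < π)
    {s : ℝ} (hs0 : 0 ≤ s) (hs1 : s ≤ 1) (hC : (s • B + (1 - s) • B').IsHermitian)
    {J : Finset (Fin n)} (hJ : J.Nonempty) (θ : Fin n → ℝ)
    (hθ : ∀ i ∈ J, hC.eigenvalues i ≤ cot (θ i)) (hθJ : ∑ i ∈ J, θ i ∈ Set.Ioo 0 π) :
    s * cot (Qfun n J.card hB.eigenvalues) + (1 - s) * cot (Qfun n J.card hB'.eigenvalues) ≤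
      cot (∑ i ∈ J, θ i) := by
  set Q := ∑ i ∈ J, θ i
  set U : Matrix (Fin n) (Fin n) ℂ := ↑hC.eigenvectorUnitary
  have hU : U ∈ unitaryGroup (Fin n) ℂ := hC.eigenvectorUnitary.2
  have hdiag (i : Fin n) :
      s * ((star U * B * U) i i).re + (1 - s) * ((star U * B' * U) i i).re =
        hC.eigenvalues i := by
    have h := congr_fun₂ hC.conjStarAlgAut_star_eigenvectorUnitary i i
    simp only [Unitary.conjStarAlgAut_star_apply, mul_add, add_mul, Matrix.mul_smul,
      Matrix.smul_mul, diagonal_apply_eq, Function.comp_apply] at h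
    simpa using congr_arg Complex.re h
  have hgap : s * cotGap Q (Qfun n J.card hB.eigenvalues)
      + (1 - s) * cotGap Q (Qfun n J.card hB'.eigenvalues) ≤ 0 :=
    calc _ ≤ s * ∑ i ∈ J, sin (θ i) ^ 2 * (((star U * B * U) i i).re - cot (θ i))
          + (1 - s) * ∑ i ∈ J, sin (θ i) ^ 2 * (((star U * B' * U) i i).re - cot (θ i)) :=
        add_le_add (mul_le_mul_of_nonneg_left (cotGap_Qfun_le hB hΓB hU hJ θ) hs0)
          (mul_le_mul_of_nonneg_left (cotGap_Qfun_le hB' hΓB' hU hJ θ) (by linarith))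
      _ = ∑ i ∈ J, sin (θ i) ^ 2 * (hC.eigenvalues i - cot (θ i)) := by
        rw [mul_sum, mul_sum, ← sum_add_distrib]
        refine sum_congr rfl fun i _ => ?_
        rw [← hdiag]
        ring
      _ ≤ 0 := sum_nonpos fun i hi =>
        mul_nonpos_of_nonneg_of_nonpos (sq_nonneg _) (sub_nonpos.2 (hθ i hi))
  have hsin : 0 < sin Q ^ 2 := pow_pos (sin_pos_of_pos_of_lt_pi hθJ.1 hθJ.2) 2
  have hmul : sin Q ^ 2 * (s * cot (Qfun n J.card hB.eigenvalues)
      + (1 - s) * cot (Qfun n J.card hB'.eigenvalues) - cot Q) ≤ 0 := by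
    unfold cotGap at hgap
    linarith
  exact sub_nonpos.1 (nonpos_of_mul_nonpos_right hmul hsin)

lemma sum_arccot_eigenvalues_lt_pi {B B' : Matrix (Fin n) (Fin n) ℂ}
    (hB : B.IsHermitian) (hB' : B'.IsHermitian)
    (hΓB : ∑ i, arccot (hB.eigenvalues i) < π) (hΓB' : ∑ i, arccot (hB'.eigenvalues i) < π)
    {s : ℝ} (hs0 : 0 ≤ s) (hs1 : s ≤ 1) (hC : (s • B + (1 - s) • B').IsHermitian) :
    ∑ i, arccot (hC.eigenvalues i) < π := by
  by_contra! hG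
  rcases (univ : Finset (Fin n)).eq_empty_or_nonempty with h | hne
  · rw [h, sum_empty] at hG
    linarith [pi_pos]
  set G := ∑ i, arccot (hC.eigenvalues i)
  set V := s * cot (Qfun n n hB.eigenvalues) + (1 - s) * cot (Qfun n n hB'.eigenvalues)
  -- scale the angles of `C` down to a total `arccot (V - 1)`, whose cotangent is below `V`
  set r := arccot (V - 1) / G
  have hr0 : 0 < r := div_pos (arccot_pos _) (pi_pos.trans_le hG)
  have hr1 : r ≤ 1 := (div_le_one (pi_pos.trans_le hG)).2 ((arccot_lt_pi _).le.trans hG)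
  have hθ (i : Fin n) (_ : i ∈ univ) :
      hC.eigenvalues i ≤ cot (r * arccot (hC.eigenvalues i)) := by
    have ha := arccot_pos (hC.eigenvalues i)
    have hb := arccot_lt_pi (hC.eigenvalues i)
    conv_lhs => rw [← cot_arccot (hC.eigenvalues i)]
    exact strictAntiOn_cot.antitoneOn ⟨by positivity, by nlinarith⟩ ⟨ha, hb⟩ (by nlinarith)
  have hsum : ∑ i, r * arccot (hC.eigenvalues i) = arccot (V - 1) := by
    rw [← mul_sum, div_mul_cancel₀ _ (pi_pos.trans_le hG).ne']
  have := convexComb_cot_Qfun_le_cot_sum hB hB' hΓB hΓB' hs0 hs1 hC hne _ hθ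
    (hsum ▸ ⟨arccot_pos _, arccot_lt_pi _⟩)
  rw [card_univ, Fintype.card_fin, hsum, cot_arccot] at this
  linarith

end Concavity

theorem cot_Qfun_concave_hermitian (n k : ℕ) (hk : 1 ≤ k) (hkn : k ≤ n)
    (B B' : Matrix (Fin n) (Fin n) ℂ)
    (hB : B.IsHermitian) (hB' : B'.IsHermitian)
    (hΓB : (∑ i, arccot (hB.eigenvalues i)) < π)
    (hΓB' : (∑ i, arccot (hB'.eigenvalues i)) < π)
    (s : ℝ) (hs0 : 0 ≤ s) (hs1 : s ≤ 1)
    (hC : (s • B + (1 - s) • B').IsHermitian) :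
    s * Real.cot (Qfun n k hB.eigenvalues) + (1 - s) * Real.cot (Qfun n k hB'.eigenvalues) ≤
      Real.cot (Qfun n k hC.eigenvalues) := by
  have hΓC := sum_arccot_eigenvalues_lt_pi hB hB' hΓB hΓB' hs0 hs1 hC
  obtain ⟨J, hJk, hQJ⟩ := exists_card_eq_Qfun_eq_sum hC.eigenvalues hkn
  have hJ : J.Nonempty := card_pos.1 (by omega)
  have hQ : ∑ i ∈ J, arccot (hC.eigenvalues i) ∈ Set.Ioo 0 π :=
    ⟨sum_pos (fun i _ => arccot_pos _) hJ, hQJ ▸ Qfun_lt_pi _ hkn hΓC⟩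
  have := convexComb_cot_Qfun_le_cot_sum hB hB' hΓB hΓB' hs0 hs1 hC hJ _
    (fun i _ => (cot_arccot _).ge) hQ
  rwa [hJk, ← hQJ] at this
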